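/- arXiv:0910.3931 — 2 statements merged into one kernel-verified Lean document; each statement's English description precedes it below -/
import Mathlib

section
/- With notation as in the paper, for r = 1 the coefficient c_{0,1,d} equals 2^{d-3}; that is, sum over n from 1 to d and m from 0 to floor(n/2) of ((-1)^{n-1} 2^{d-n-2} / n) * binom(d,n) * binom(n,m) * (n-2m)^2 equals 2^{d-3}. -/
/-!
The symmetric sum `∑_{m ≤ n} C(n,m) (n - 2m)^2` equals `n 2^n` (the variance of a simple random
walk after `n` steps), and the half of it over `m ≤ n/2` is `n 2^(n-1)` because the summand is
invariant under `m ↦ n - m` and vanishes at `m = n/2`. The factor `n` cancels the `1/n`, so each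
term of `c_{0,1,d}` is `(-1)^(n-1) C(d,n) 2^(d-3)`, and `∑_{n=1}^d (-1)^(n-1) C(d,n) = 1`.
-/

open Finset

/-- The coefficient `c_{t,1,d}` from the class formula for special subvarieties
associated to a `g^1_d`:
`c_{t,1,d} = ∑_{n=1}^{d} ∑_{m=0}^{⌊n/2⌋} ((-1)^{n-1}/n)·2^{d-n-t-2}·C(d,n)·C(n,m)·(n-2m)^{t+2}`. -/
noncomputable def cCoeff (t d : ℕ) : ℚ :=
  ∑ n ∈ Icc 1 d, ∑ m ∈ range (n / 2 + 1),
    ((-1 : ℚ) ^ (n - 1) / n) * (2 : ℚ) ^ ((d : ℤ) - n - t - 2) *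
      (d.choose n) * (n.choose m) * ((n : ℚ) - 2 * m) ^ (t + 2)

section

variable {R : Type*} [CommRing R]

theorem sum_range_choose_mul_sub_two_mul_sq (n : ℕ) :
    ∑ i ∈ range (n + 1), (n.choose i : R) * ((n : R) - 2 * i) ^ 2 = (n : R) * 2 ^ n := by
  induction n with
  | zero => simp
  | succ n ih =>
    -- `n - 2i = (n - i) - i` puts the summand in the shape of `sum_choose_succ_mul`
    have hsplit := sum_choose_succ_mul (fun i j ↦ ((j : R) - i) ^ 2) n
    have hsummand : ∀ i ∈ range (n + 2), ((n + 1).choose i : R) * (((n + 1 - i : ℕ) : R) - i) ^ 2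
        = ((n + 1).choose i : R) * (((n + 1 : ℕ) : R) - 2 * i) ^ 2 := fun i hi ↦ by
      rw [Nat.cast_sub (mem_range_succ_iff.mp hi)]
      ring
    rw [sum_congr rfl hsummand] at hsplit
    calc ∑ i ∈ range (n + 1 + 1), ((n + 1).choose i : R) * (((n + 1 : ℕ) : R) - 2 * i) ^ 2
        = ∑ i ∈ range (n + 1), (2 * ((n.choose i : R) * ((n : R) - 2 * i) ^ 2)
            + 2 * (n.choose i : R)) := by
          rw [hsplit, ← sum_add_distrib]
          refine sum_congr rfl fun i hi ↦ ?_
          rw [Nat.cast_sub (by grind), Nat.cast_sub (mem_range_succ_iff.mp hi)]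
          push_cast
          ring
      _ = ((n + 1 : ℕ) : R) * 2 ^ (n + 1) := by
          rw [sum_add_distrib, ← mul_sum, ← mul_sum, ih, ← Nat.cast_sum, Nat.sum_range_choose]
          push_cast
          ring

theorem two_mul_sum_range_half_choose_mul_sub_two_mul_sq (n : ℕ) :
    2 * ∑ i ∈ range (n / 2 + 1), (n.choose i : R) * ((n : R) - 2 * i) ^ 2 = (n : R) * 2 ^ n := by
  set g : ℕ → R := fun i ↦ (n.choose i : R) * ((n : R) - 2 * i) ^ 2 with hg
  have hsymm : ∀ i ≤ n, g (n - i) = g i := fun i hi ↦ by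
    simp only [hg, Nat.choose_symm hi, Nat.cast_sub hi]
    ring
  have hupper : ∑ i ∈ Ico (n / 2 + 1) (n + 1), g i = ∑ i ∈ range ((n + 1) / 2), g i := by
    have hreflect := sum_Ico_reflect g 0 (m := (n + 1) / 2) (n := n) (by omega)
    rw [show n + 1 - (n + 1) / 2 = n / 2 + 1 by omega, Nat.sub_zero] at hreflect
    rw [← hreflect, range_eq_Ico]
    exact sum_congr rfl fun i hi ↦ hsymm i (by simp only [mem_Ico] at hi; omega)
  -- for even `n` the extra term `i = n / 2` has `n - 2 i = 0`
  have hmiddle : ∑ i ∈ range ((n + 1) / 2), g i = ∑ i ∈ range (n / 2 + 1), g i := by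
    refine sum_subset (range_subset_range.2 (by omega)) fun i hi hi' ↦ ?_
    simp only [mem_range] at hi hi'
    have h2i : (n : R) = 2 * i := by rw [show n = 2 * i by omega]; push_cast; ring
    simp [hg, h2i]
  rw [← sum_range_choose_mul_sub_two_mul_sq, ← sum_range_add_sum_Ico g (by omega : n / 2 + 1 ≤ n + 1),
    hupper, hmiddle, two_mul]

theorem sum_Icc_neg_one_pow_pred_mul_choose {d : ℕ} (hd : d ≠ 0) :
    ∑ n ∈ Icc 1 d, (-1 : R) ^ (n - 1) * d.choose n = 1 := by
  have h := congrArg (Int.cast : ℤ → R) (Int.alternating_sum_range_choose_of_ne hd)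
  push_cast at h
  rw [sum_range_succ'] at h
  simp only [pow_succ, mul_neg_one, neg_mul, sum_neg_distrib, pow_zero, Nat.choose_zero_right,
    Nat.cast_one, mul_one] at h
  rw [← Ico_add_one_right_eq_Icc, sum_Ico_eq_sum_range]
  simp only [add_tsub_cancel_right, add_comm 1]
  linear_combination -h

end

theorem cCoeff_zero (d : ℕ) :
    cCoeff 0 d = (∑ n ∈ Icc 1 d, (-1 : ℚ) ^ (n - 1) * d.choose n) * 2 ^ ((d : ℤ) - 3) := by
  rw [cCoeff, sum_mul]
  refine sum_congr rfl fun n hn ↦ ?_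
  have hn : (n : ℚ) ≠ 0 := by simp only [mem_Icc] at hn; exact_mod_cast (by omega : n ≠ 0)
  have hpow : (2 : ℚ) ^ ((d : ℤ) - 3) = 2 ^ ((d : ℤ) - n - 2) * 2 ^ n / 2 := by
    rw [← zpow_natCast, ← zpow_add₀ two_ne_zero, eq_div_iff two_ne_zero,
      ← zpow_add_one₀ two_ne_zero]
    ring_nf
  have hhalf := two_mul_sum_range_half_choose_mul_sub_two_mul_sq (R := ℚ) n
  simp only [zero_add, Nat.cast_zero, sub_zero, mul_assoc, ← mul_sum]
  rw [hpow, eq_div_of_mul_eq two_ne_zero ((mul_comm _ _).trans hhalf)]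
  field_simp

/-- For `r = 1` and `t = 0`, the coefficient `c_{0,1,d}` equals `2^{d-3}`. -/
theorem statement_8 (d : ℕ) (hd : 2 ≤ d) :
    cCoeff 0 d = (2 : ℚ) ^ ((d : ℤ) - 3) := by
  rw [cCoeff_zero, sum_Icc_neg_one_pow_pred_mul_choose (by omega), one_mul]
end

section
/- Let nu : B -> X be the normalization of an integral projective curve X with a single node obtained by gluing distinct points p, q of B. For an invertible sheaf M of degree d on B with h^0(M) = r+1 and h^0(M(-p-q)) = r, there is a unique surjection h : nu_* M -> sk onto the skyscraper sheaf at the node which induces the zero map on global sections, and its kernel L satisfies h^0(X, L) = r + 1. -/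
/-!
The functionals on the fiber `W` that kill the image of `ev` form the annihilator of `range ev`.
By rank–nullity `range ev` is a line in the plane `W`, so this annihilator is a line in the dual:
it contains a nonzero functional, unique up to a scalar, and nonzero functionals to `ℂ` are
surjective. Since `h ∘ ev = 0`, the global sections of the kernel are all of `V`.
-/

open Module LinearMap

section

variable {K V W : Type*} [Field K] [AddCommGroup V] [Module K V] [AddCommGroup W] [Module K W]
  [FiniteDimensional K W]

theorem LinearMap.finrank_ker_dualMap_eq_one (f : V →ₗ[K] W)
    (hf : finrank K (range f) + 1 = finrank K W) : finrank K (ker f.dualMap) = 1 := by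
  have := Subspace.finrank_add_finrank_dualAnnihilator_eq (range f)
  rw [ker_dualMap_eq_dualAnnihilator_range]
  omega

theorem LinearMap.exists_dual_comp_eq_zero_unique_up_to_smul (f : V →ₗ[K] W)
    (hf : finrank K (range f) + 1 = finrank K W) :
    ∃ h : Dual K W, h ≠ 0 ∧ h ∘ₗ f = 0 ∧ ∀ h' : Dual K W, h' ∘ₗ f = 0 → ∃ c : K, h' = c • h := by
  -- instance search does not find this for a submodule of `Dual K W` on its own
  have := Module.Free.of_divisionRing K (ker f.dualMap)
  obtain ⟨⟨h, hker⟩, hne, hspan⟩ :=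
    (finrank_eq_one_iff' (K := K) (V := ker f.dualMap)).mp (f.finrank_ker_dualMap_eq_one hf)
  refine ⟨h, fun h0 => hne (Subtype.ext h0), hker, fun h' hh' => ?_⟩
  obtain ⟨c, hc⟩ := hspan ⟨h', hh'⟩
  exact ⟨c, congrArg Subtype.val hc.symm⟩

end

/-- Let `ν : B → X` be the normalization of the 1-nodal curve `X = B_{pq}` and
`M` an invertible sheaf of degree `d` on `B` with `h⁰(M) = r+1` and
`h⁰(M(-p-q)) = r`.  Abstractly: `V = H⁰(B, M)` with `dim V = r+1`, `W` the
2-dimensional fiber of `ν_* M` at the node (`= M_p ⊕ M_q`), and `ev : V → W`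
the evaluation map, whose kernel `H⁰(M(-p-q))` has dimension `r`.  Then there
is a surjection `h : W → ℂ` (i.e. a surjection `ν_* M ↠ sk` onto the skyscraper
at the node) inducing the zero map on global sections, its kernel `L` satisfies
`h⁰(X, L) = dim ker(h ∘ ev) = r + 1`, and `h` is unique up to a nonzero
scalar. -/
theorem statement_13 (r : ℕ) (V W : Type*)
    [AddCommGroup V] [Module ℂ V] [AddCommGroup W] [Module ℂ W]
    [FiniteDimensional ℂ V] [FiniteDimensional ℂ W]
    (hV : Module.finrank ℂ V = r + 1) (hW : Module.finrank ℂ W = 2)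
    (ev : V →ₗ[ℂ] W)
    (hker : Module.finrank ℂ (LinearMap.ker ev) = r) :
    ∃ h : W →ₗ[ℂ] ℂ, Function.Surjective h ∧ h.comp ev = 0 ∧
      Module.finrank ℂ (LinearMap.ker (h.comp ev)) = r + 1 ∧
      ∀ h' : W →ₗ[ℂ] ℂ, Function.Surjective h' → h'.comp ev = 0 →
        ∃ c : ℂ, c ≠ 0 ∧ h' = c • h := by
  have hrange : finrank ℂ (range ev) + 1 = finrank ℂ W := by
    have := ev.finrank_range_add_finrank_ker
    omega
  obtain ⟨h, hne, hcomp, hunique⟩ := ev.exists_dual_comp_eq_zero_unique_up_to_smul hrange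
  refine ⟨h, surjective_iff_ne_zero.mpr hne, hcomp, ?_, fun h' hsurj' hcomp' => ?_⟩
  · rw [hcomp, ker_zero, finrank_top, hV]
  · obtain ⟨c, rfl⟩ := hunique h' hcomp'
    refine ⟨c, ?_, rfl⟩
    rintro rfl
    exact surjective_iff_ne_zero.mp hsurj' (zero_smul ℂ h)
end
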